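/- Let F : ℝ ⇒ ℝ be a cyclically quasi-monotone multi-map with full domain. Then there exists a lower semi-continuous quasi-convex function f : ℝ → ℝ such that F(x) ⊆ N_f(x) for every x ∈ ℝ. -/

import Mathlib

/-- Cyclic quasi-monotonicity of a multi-map `F : ℝ ⇒ ℝ`. -/
def CyclicallyQuasiMonotone1 (F : ℝ → Set ℝ) : Prop :=
  ∀ (N : ℕ) (x p : ℕ → ℝ),
    0 < N → x N = x 0 → (∀ i < N, p i ∈ F (x i)) →
    ∃ i < N, p i * (x (i + 1) - x i) ≤ 0

/-- The normal cone multi-map of `f : ℝ → ℝ`. -/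
def NormalConeMap1 (f : ℝ → ℝ) (x : ℝ) : Set ℝ :=
  {p | ∀ w, f w ≤ f x → p * (w - x) ≤ 0}

/-!
Testing the cyclic condition on two-point cycles shows that every point carrying a negative
element of `F` lies weakly to the left of every point carrying a positive one. Choose a cut `c`
between the images of these two sets under `arctan`; since `arctan` maps `ℝ` into a bounded
interval, the cut exists even when one side is empty or unbounded. Then `|arctan x - c|` is
increasing to the right of the cut and decreasing to its left, so each element of `F x` is
normal to its sublevel set at `x`.
-/

open Real Set

lemma CyclicallyQuasiMonotone1.le_of_pos_of_neg {F : ℝ → Set ℝ}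
    (hF : CyclicallyQuasiMonotone1 F) {x y p q : ℝ} (hp : p ∈ F x) (hq : q ∈ F y)
    (hp0 : 0 < p) (hq0 : q < 0) : y ≤ x := by
  by_contra! hxy
  obtain ⟨i, hi, hle⟩ := hF 2 (fun i => if i = 1 then y else x)
    (fun i => if i = 1 then q else p) two_pos (by simp)
    (by intro i hi; interval_cases i <;> simpa)
  interval_cases i <;> norm_num at hle <;> nlinarith

lemma exists_arctan_le_le {A B : Set ℝ} (h : ∀ a ∈ A, ∀ b ∈ B, a ≤ b) :
    ∃ c, (∀ a ∈ A, arctan a ≤ c) ∧ ∀ b ∈ B, c ≤ arctan b := by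
  refine ⟨sInf (insert (π / 2) (arctan '' B)), fun a ha => le_csInf (insert_nonempty _ _) ?_,
    fun b hb => csInf_le ⟨-(π / 2), ?_⟩ (mem_insert_of_mem _ (mem_image_of_mem _ hb))⟩
  · rintro _ (rfl | ⟨b, hb, rfl⟩)
    · exact (arctan_lt_pi_div_two a).le
    · exact arctan_strictMono.monotone (h a ha b hb)
  · rintro _ (rfl | ⟨b, -, rfl⟩)
    · linarith [pi_pos]
    · exact (neg_pi_div_two_lt_arctan b).le

lemma convex_setOf_abs_sub_le_of_monotone {g : ℝ → ℝ} (hg : Monotone g) (c ℓ : ℝ) :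
    Convex ℝ {x | |g x - c| ≤ ℓ} := by
  have hpre : {x | |g x - c| ≤ ℓ} = g ⁻¹' Icc (c - ℓ) (c + ℓ) := by
    ext x
    simp only [mem_ofPred_eq, mem_preimage, mem_Icc, abs_sub_le_iff]
    constructor <;> intro h <;> constructor <;> linarith [h.1, h.2]
  rw [hpre]
  exact convex_iff_ordConnected.mpr (ordConnected_Icc.preimage_mono hg)

lemma mem_normalConeMap1_abs_sub {g : ℝ → ℝ} (hg : StrictMono g) {c x p : ℝ}
    (hpos : 0 < p → c ≤ g x) (hneg : p < 0 → g x ≤ c) :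
    p ∈ NormalConeMap1 (fun x => |g x - c|) x := by
  intro w (hw : |g w - c| ≤ |g x - c|)
  rcases lt_trichotomy p 0 with hp | rfl | hp
  · have hxw : x ≤ w := by
      have hgx := hneg hp
      rw [abs_of_nonpos (sub_nonpos.mpr hgx), abs_le] at hw
      exact hg.le_iff_le.mp (by linarith [hw.1])
    nlinarith
  · simp
  · have hwx : w ≤ x := by
      have hgx := hpos hp
      rw [abs_of_nonneg (sub_nonneg.mpr hgx), abs_le] at hw
      exact hg.le_iff_le.mp (by linarith [hw.2])
    nlinarith

theorem stmt14 (F : ℝ → Set ℝ)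
    (hF : CyclicallyQuasiMonotone1 F) :
    ∃ f : ℝ → ℝ, LowerSemicontinuous f ∧
      (∀ ℓ : ℝ, Convex ℝ {x : ℝ | f x ≤ ℓ}) ∧
      ∀ x, F x ⊆ NormalConeMap1 f x := by
  obtain ⟨c, hneg, hpos⟩ := exists_arctan_le_le (A := {y | ∃ q ∈ F y, q < 0})
    (B := {x | ∃ p ∈ F x, 0 < p})
    fun _ ⟨_, hq, hq0⟩ _ ⟨_, hp, hp0⟩ => hF.le_of_pos_of_neg hp hq hp0 hq0
  refine ⟨fun x => |arctan x - c|,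
    ((continuous_arctan.sub continuous_const).abs).lowerSemicontinuous,
    convex_setOf_abs_sub_le_of_monotone arctan_strictMono.monotone c,
    fun x p hp => mem_normalConeMap1_abs_sub arctan_strictMono
      (fun hp0 => hpos x ⟨p, hp, hp0⟩) (fun hp0 => hneg x ⟨p, hp, hp0⟩)⟩
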